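/- arXiv:1408.3060 — 3 statements merged into one kernel-verified Lean document; each statement's English description precedes it below -/
import Mathlib

section
/- Let (z_j, z_t) be jointly Gaussian with mean zero, common variance v², and correlation ρ. Then Cov(cos(z_j), cos(z_t)) = exp(-v²)·(cosh(v²ρ) - 1). -/
open MeasureTheory ProbabilityTheory

namespace CovCosAux

open Real Complex
open scoped ENNReal NNReal

/-- The complex Gaussian–Fourier integral specialized to our setting. -/
lemma cexp_integral (a : ℝ) :
    ∫ x : ℝ, Complex.exp ((-1/2 : ℂ) * x ^ 2 + (a * Complex.I) * x + 0) =
      ((Real.sqrt (2 * π) * Real.exp (-a ^ 2 / 2) : ℝ) : ℂ) := by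
  rw [integral_cexp_quadratic (by norm_num) (a * Complex.I) 0]
  have h1 : ((π : ℂ) / -(-1/2)) = ((2 * π : ℝ) : ℂ) := by push_cast; ring
  have h2 : (0 : ℂ) - (a * Complex.I) ^ 2 / (4 * (-1/2)) = ((-a ^ 2 / 2 : ℝ) : ℂ) := by
    push_cast
    rw [mul_pow, Complex.I_sq]
    ring
  rw [h1, h2]
  rw [show ((2 * π : ℝ) : ℂ) ^ (1 / 2 : ℂ) = ((Real.sqrt (2 * π) : ℝ) : ℂ) by
    rw [Real.sqrt_eq_rpow, Complex.ofReal_cpow (by positivity)]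
    norm_num]
  rw [← Complex.ofReal_exp, ← Complex.ofReal_mul]

lemma cexp_decomp (a x : ℝ) :
    Complex.exp ((-1/2 : ℂ) * x ^ 2 + (a * Complex.I) * x + 0) =
      ((Real.cos (a * x) * Real.exp (-x ^ 2 / 2) : ℝ) : ℂ) +
        ((Real.sin (a * x) * Real.exp (-x ^ 2 / 2) : ℝ) : ℂ) * Complex.I := by
  have : ((-1/2 : ℂ) * x ^ 2 + (a * Complex.I) * x + 0)
      = ((-x ^ 2 / 2 : ℝ) : ℂ) + ((a * x : ℝ) : ℂ) * Complex.I := by push_cast; ring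
  rw [this, Complex.exp_add, Complex.exp_mul_I, ← Complex.ofReal_cos, ← Complex.ofReal_sin,
    ← Complex.ofReal_exp]
  rw [Complex.ofReal_mul, Complex.ofReal_mul]
  ring

lemma cexp_integrable (a : ℝ) :
    Integrable (fun x : ℝ => Complex.exp ((-1/2 : ℂ) * x ^ 2 + (a * Complex.I) * x + 0)) :=
  integrable_cexp_quadratic' (by norm_num) _ _

lemma cos_weighted (a : ℝ) :
    ∫ x : ℝ, Real.cos (a * x) * Real.exp (-x ^ 2 / 2) =
      Real.sqrt (2 * π) * Real.exp (-a ^ 2 / 2) := by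
  have h := cexp_integral a
  have hre : ∀ x : ℝ,
      (Complex.exp ((-1/2 : ℂ) * x ^ 2 + (a * Complex.I) * x + 0)).re
        = Real.cos (a * x) * Real.exp (-x ^ 2 / 2) := by
    intro x
    rw [cexp_decomp]
    simp only [Complex.add_re, Complex.mul_re, Complex.I_re, Complex.I_im, Complex.ofReal_re,
      Complex.ofReal_im]
    ring
  calc ∫ x : ℝ, Real.cos (a * x) * Real.exp (-x ^ 2 / 2)
      = ∫ x : ℝ, RCLike.re (Complex.exp ((-1/2 : ℂ) * x ^ 2 + (a * Complex.I) * x + 0)) := by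
        refine integral_congr_ae (ae_of_all _ fun x => ?_)
        simpa [RCLike.re_to_complex] using (hre x).symm
    _ = RCLike.re (∫ x : ℝ, Complex.exp ((-1/2 : ℂ) * x ^ 2 + (a * Complex.I) * x + 0)) :=
        integral_re (cexp_integrable a)
    _ = _ := by rw [h, RCLike.re_to_complex, Complex.ofReal_re]

lemma sin_weighted (a : ℝ) :
    ∫ x : ℝ, Real.sin (a * x) * Real.exp (-x ^ 2 / 2) = 0 := by
  have h := cexp_integral a
  have him : ∀ x : ℝ,
      (Complex.exp ((-1/2 : ℂ) * x ^ 2 + (a * Complex.I) * x + 0)).im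
        = Real.sin (a * x) * Real.exp (-x ^ 2 / 2) := by
    intro x
    rw [cexp_decomp]
    simp only [Complex.add_im, Complex.mul_im, Complex.I_re, Complex.I_im, Complex.ofReal_re,
      Complex.ofReal_im]
    ring
  calc ∫ x : ℝ, Real.sin (a * x) * Real.exp (-x ^ 2 / 2)
      = ∫ x : ℝ, RCLike.im (Complex.exp ((-1/2 : ℂ) * x ^ 2 + (a * Complex.I) * x + 0)) := by
        refine integral_congr_ae (ae_of_all _ fun x => ?_)
        simpa [RCLike.im_to_complex] using (him x).symm
    _ = RCLike.im (∫ x : ℝ, Complex.exp ((-1/2 : ℂ) * x ^ 2 + (a * Complex.I) * x + 0)) :=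
        integral_im (cexp_integrable a)
    _ = 0 := by rw [h, RCLike.im_to_complex, Complex.ofReal_im]

/-- Integrals against the standard Gaussian reduce to weighted Lebesgue integrals. -/
lemma integral_gaussianReal (f : ℝ → ℝ) :
    ∫ x, f x ∂(gaussianReal 0 1) = ∫ x, gaussianPDFReal 0 1 x * f x := by
  rw [gaussianReal_of_var_ne_zero _ one_ne_zero]
  have hmeas : Measurable fun x => (gaussianPDFReal 0 1 x).toNNReal :=
    (measurable_gaussianPDFReal 0 1).real_toNNReal
  have : (gaussianPDF 0 1) = fun x => ((gaussianPDFReal 0 1 x).toNNReal : ℝ≥0∞) := by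
    funext x; rfl
  rw [this, integral_withDensity_eq_integral_smul hmeas]
  refine integral_congr_ae (ae_of_all _ fun x => ?_)
  simp [NNReal.smul_def, Real.coe_toNNReal _ (gaussianPDFReal_nonneg 0 1 x)]

lemma pdf_eq (x : ℝ) :
    gaussianPDFReal 0 1 x = (Real.sqrt (2 * π))⁻¹ * Real.exp (-x ^ 2 / 2) := by
  simp [gaussianPDFReal]

lemma sqrt_two_pi_ne : Real.sqrt (2 * π) ≠ 0 := by
  positivity

lemma integral_cos (a : ℝ) :
    ∫ x, Real.cos (a * x) ∂(gaussianReal 0 1) = Real.exp (-a ^ 2 / 2) := by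
  rw [integral_gaussianReal]
  have : ∀ x : ℝ, gaussianPDFReal 0 1 x * Real.cos (a * x)
      = (Real.sqrt (2 * π))⁻¹ * (Real.cos (a * x) * Real.exp (-x ^ 2 / 2)) := by
    intro x; rw [pdf_eq]; ring
  rw [integral_congr_ae (ae_of_all _ this), integral_const_mul, cos_weighted]
  field_simp

lemma integral_sin (a : ℝ) :
    ∫ x, Real.sin (a * x) ∂(gaussianReal 0 1) = 0 := by
  rw [integral_gaussianReal]
  have : ∀ x : ℝ, gaussianPDFReal 0 1 x * Real.sin (a * x)
      = (Real.sqrt (2 * π))⁻¹ * (Real.sin (a * x) * Real.exp (-x ^ 2 / 2)) := by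
    intro x; rw [pdf_eq]; ring
  rw [integral_congr_ae (ae_of_all _ this), integral_const_mul, sin_weighted, mul_zero]

lemma integrable_bdd {f : ℝ → ℝ} (hf : Measurable f) (hbd : ∀ x, |f x| ≤ 1) :
    Integrable f (gaussianReal 0 1) := by
  refine Integrable.mono' (integrable_const 1) hf.aestronglyMeasurable
    (ae_of_all _ fun x => ?_)
  simpa using hbd x

lemma integrable_cos (a : ℝ) : Integrable (fun x => Real.cos (a * x)) (gaussianReal 0 1) :=
  integrable_bdd (by fun_prop) fun x => Real.abs_cos_le_one _

lemma integrable_sin (a : ℝ) : Integrable (fun x => Real.sin (a * x)) (gaussianReal 0 1) :=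
  integrable_bdd (by fun_prop) fun x => Real.abs_sin_le_one _

lemma integrable_coscos (a b : ℝ) :
    Integrable (fun x => Real.cos (a * x) * Real.cos (b * x)) (gaussianReal 0 1) :=
  integrable_bdd (by fun_prop) fun x => by
    rw [abs_mul]
    exact mul_le_one₀ (Real.abs_cos_le_one _) (abs_nonneg _) (Real.abs_cos_le_one _)

lemma integrable_cossin (a b : ℝ) :
    Integrable (fun x => Real.cos (a * x) * Real.sin (b * x)) (gaussianReal 0 1) :=
  integrable_bdd (by fun_prop) fun x => by
    rw [abs_mul]
    exact mul_le_one₀ (Real.abs_cos_le_one _) (abs_nonneg _) (Real.abs_sin_le_one _)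

lemma integral_coscos (a b : ℝ) :
    ∫ x, Real.cos (a * x) * Real.cos (b * x) ∂(gaussianReal 0 1)
      = (Real.exp (-(a + b) ^ 2 / 2) + Real.exp (-(a - b) ^ 2 / 2)) / 2 := by
  have hpt : ∀ x : ℝ, Real.cos (a * x) * Real.cos (b * x)
      = (Real.cos ((a + b) * x) + Real.cos ((a - b) * x)) / 2 := by
    intro x
    rw [show (a + b) * x = a * x + b * x by ring, show (a - b) * x = a * x - b * x by ring,
      Real.cos_add, Real.cos_sub]
    ring
  rw [integral_congr_ae (ae_of_all _ hpt), integral_div,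
    integral_add (integrable_cos _) (integrable_cos _), integral_cos, integral_cos]

end CovCosAux

/-- For a centered bivariate Gaussian pair `(z_j, z_t)` with common variance `v²` and
correlation `ρ`, realized via the Cholesky factorization
`z_j = v g₁`, `z_t = v (ρ g₁ + √(1-ρ²) g₂)` with `g₁, g₂` i.i.d. `N(0,1)`:
`Cov(cos z_j, cos z_t) = exp(-v²) (cosh(v² ρ) - 1)`. -/
theorem cov_cos_cos_bivariate_gaussian (v ρ : ℝ) (hρ₁ : -1 ≤ ρ) (hρ₂ : ρ ≤ 1)
    (μ : Measure (ℝ × ℝ)) (hμ : μ = (gaussianReal 0 1).prod (gaussianReal 0 1))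
    (zj zt : ℝ × ℝ → ℝ) (hzj : zj = fun g => v * g.1)
    (hzt : zt = fun g => v * (ρ * g.1 + Real.sqrt (1 - ρ ^ 2) * g.2)) :
    (∫ g, Real.cos (zj g) * Real.cos (zt g) ∂μ) -
        (∫ g, Real.cos (zj g) ∂μ) * (∫ g, Real.cos (zt g) ∂μ) =
      Real.exp (-v ^ 2) * (Real.cosh (v ^ 2 * ρ) - 1) := by
  open CovCosAux in
  subst hμ hzj hzt
  set s := Real.sqrt (1 - ρ ^ 2) with hs
  have hs2 : s ^ 2 = 1 - ρ ^ 2 := Real.sq_sqrt (by nlinarith)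
  -- first marginal
  have hA : ∫ g : ℝ × ℝ, Real.cos (v * g.1) ∂((gaussianReal 0 1).prod (gaussianReal 0 1)) = Real.exp (-v ^ 2 / 2) := by
    rw [integral_congr_ae (ae_of_all _ fun g : ℝ × ℝ =>
      (mul_one (Real.cos (v * g.1))).symm),
      integral_prod_mul (f := fun x => Real.cos (v * x)) (g := fun _ : ℝ => (1 : ℝ))]
    simp [CovCosAux.integral_cos]
  -- second marginal
  have hB : ∫ g : ℝ × ℝ, Real.cos (v * (ρ * g.1 + s * g.2)) ∂((gaussianReal 0 1).prod (gaussianReal 0 1))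
      = Real.exp (-v ^ 2 / 2) := by
    have hpt : ∀ g : ℝ × ℝ, Real.cos (v * (ρ * g.1 + s * g.2))
        = Real.cos ((v * ρ) * g.1) * Real.cos ((v * s) * g.2)
          - Real.sin ((v * ρ) * g.1) * Real.sin ((v * s) * g.2) := by
      intro g
      rw [show v * (ρ * g.1 + s * g.2) = (v * ρ) * g.1 + (v * s) * g.2 by ring, Real.cos_add]
    rw [integral_congr_ae (ae_of_all _ hpt),
      integral_sub ((CovCosAux.integrable_cos (v * ρ)).mul_prod (CovCosAux.integrable_cos (v * s)))
        ((CovCosAux.integrable_sin (v * ρ)).mul_prod (CovCosAux.integrable_sin (v * s))),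
      integral_prod_mul (f := fun x => Real.cos ((v * ρ) * x))
        (g := fun y => Real.cos ((v * s) * y)),
      integral_prod_mul (f := fun x => Real.sin ((v * ρ) * x))
        (g := fun y => Real.sin ((v * s) * y)),
      CovCosAux.integral_cos, CovCosAux.integral_cos, CovCosAux.integral_sin]
    rw [zero_mul, sub_zero, ← Real.exp_add]
    congr 1
    rw [show -(v * ρ) ^ 2 / 2 + -(v * s) ^ 2 / 2 = -(v ^ 2 * ρ ^ 2 + v ^ 2 * s ^ 2) / 2 by ring,
      hs2]
    ring
  -- cross moment
  have hC : ∫ g : ℝ × ℝ, Real.cos (v * g.1) * Real.cos (v * (ρ * g.1 + s * g.2)) ∂((gaussianReal 0 1).prod (gaussianReal 0 1))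
      = (Real.exp (-(v + v * ρ) ^ 2 / 2) + Real.exp (-(v - v * ρ) ^ 2 / 2)) / 2
          * Real.exp (-(v * s) ^ 2 / 2) := by
    have hpt : ∀ g : ℝ × ℝ, Real.cos (v * g.1) * Real.cos (v * (ρ * g.1 + s * g.2))
        = (Real.cos (v * g.1) * Real.cos ((v * ρ) * g.1)) * Real.cos ((v * s) * g.2)
          - (Real.cos (v * g.1) * Real.sin ((v * ρ) * g.1)) * Real.sin ((v * s) * g.2) := by
      intro g
      rw [show v * (ρ * g.1 + s * g.2) = (v * ρ) * g.1 + (v * s) * g.2 by ring, Real.cos_add]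
      ring
    rw [integral_congr_ae (ae_of_all _ hpt),
      integral_sub
        ((CovCosAux.integrable_coscos v (v * ρ)).mul_prod (CovCosAux.integrable_cos (v * s)))
        ((CovCosAux.integrable_cossin v (v * ρ)).mul_prod (CovCosAux.integrable_sin (v * s))),
      integral_prod_mul (f := fun x => Real.cos (v * x) * Real.cos ((v * ρ) * x))
        (g := fun y => Real.cos ((v * s) * y)),
      integral_prod_mul (f := fun x => Real.cos (v * x) * Real.sin ((v * ρ) * x))
        (g := fun y => Real.sin ((v * s) * y)),
      CovCosAux.integral_sin, CovCosAux.integral_cos, CovCosAux.integral_coscos]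
    ring
  rw [hA, hB, hC]
  have hvs : (v * s) ^ 2 = v ^ 2 * (1 - ρ ^ 2) := by rw [mul_pow, hs2]
  rw [hvs, Real.cosh_eq]
  have h1 : Real.exp (-(v + v * ρ) ^ 2 / 2) * Real.exp (-(v ^ 2 * (1 - ρ ^ 2)) / 2)
      = Real.exp (-v ^ 2) * Real.exp (-(v ^ 2 * ρ)) := by
    rw [← Real.exp_add, ← Real.exp_add]; ring_nf
  have h2 : Real.exp (-(v - v * ρ) ^ 2 / 2) * Real.exp (-(v ^ 2 * (1 - ρ ^ 2)) / 2)
      = Real.exp (-v ^ 2) * Real.exp (v ^ 2 * ρ) := by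
    rw [← Real.exp_add, ← Real.exp_add]; ring_nf
  have h3 : Real.exp (-v ^ 2 / 2) * Real.exp (-v ^ 2 / 2) = Real.exp (-v ^ 2) := by
    rw [← Real.exp_add]; ring_nf
  calc (Real.exp (-(v + v * ρ) ^ 2 / 2) + Real.exp (-(v - v * ρ) ^ 2 / 2)) / 2
          * Real.exp (-(v ^ 2 * (1 - ρ ^ 2)) / 2)
        - Real.exp (-v ^ 2 / 2) * Real.exp (-v ^ 2 / 2)
      = (Real.exp (-(v + v * ρ) ^ 2 / 2) * Real.exp (-(v ^ 2 * (1 - ρ ^ 2)) / 2)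
          + Real.exp (-(v - v * ρ) ^ 2 / 2) * Real.exp (-(v ^ 2 * (1 - ρ ^ 2)) / 2)) / 2
          - Real.exp (-v ^ 2 / 2) * Real.exp (-v ^ 2 / 2) := by ring
    _ = (Real.exp (-v ^ 2) * Real.exp (-(v ^ 2 * ρ))
          + Real.exp (-v ^ 2) * Real.exp (v ^ 2 * ρ)) / 2 - Real.exp (-v ^ 2) := by
        rw [h1, h2, h3]
    _ = Real.exp (-v ^ 2) * ((Real.exp (v ^ 2 * ρ) + Real.exp (-(v ^ 2 * ρ))) / 2 - 1) := by ring
end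

section
/- Let w ∈ ℝ^d with d even, let R be a uniformly random subset of {1,...,d} of size d/2, and define X = 2∑_{i∈R} w_i² - ‖w‖². Then E[X²] ≤ 2‖w‖₄⁴, where ‖w‖₄⁴ = ∑_i w_i⁴. -/
open Finset

/-!
Write `X = ∑ᵢ aᵢ εᵢ` with `aᵢ = wᵢ²` and `εᵢ = ±1` according as `i ∈ R`, so that
`E[X²] = ∑ᵢⱼ aᵢ aⱼ E[εᵢ εⱼ]`. The diagonal terms are `E[εᵢ²] = 1`. Off the diagonal,
`∑ⱼ εⱼ = 0` because `|R| = d/2`, and the law of `R` is invariant under permutations of the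
coordinates, so `E[εᵢ εⱼ] = -1/(d-1) ≤ 0` for `i ≠ j`. As `aᵢ aⱼ ≥ 0`, this gives
`E[X²] ≤ ∑ᵢ aᵢ² = ‖w‖₄⁴`.
-/

variable {α : Type*}

lemma sum_powersetCard_univ_map_equiv [Fintype α] {M : Type*} [AddCommMonoid M] (k : ℕ)
    (σ : Equiv.Perm α) (f : Finset α → M) :
    ∑ S ∈ powersetCard k univ, f (S.map σ.toEmbedding) = ∑ S ∈ powersetCard k univ, f S := by
  conv_rhs => rw [← map_univ_equiv σ, powersetCard_map, sum_map]
  rfl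

lemma sum_mul_mul_le_sum_diag [Fintype α] {M : α → α → ℝ} (hM : ∀ i j, i ≠ j → M i j ≤ 0)
    {a : α → ℝ} (ha : ∀ i, 0 ≤ a i) :
    ∑ i, ∑ j, a i * a j * M i j ≤ ∑ i, a i * a i * M i i := by
  classical
  refine sum_le_sum fun i _ => ?_
  rw [← add_sum_erase _ _ (mem_univ i), add_le_iff_nonpos_right]
  exact sum_nonpos fun j hj =>
    mul_nonpos_of_nonneg_of_nonpos (mul_nonneg (ha i) (ha j)) (hM i j (mem_erase.mp hj).1.symm)

variable [DecidableEq α]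

def memSign (S : Finset α) (i : α) : ℝ := if i ∈ S then 1 else -1

lemma memSign_mul_self (S : Finset α) (i : α) : memSign S i * memSign S i = 1 := by
  unfold memSign; split_ifs <;> norm_num

lemma memSign_map_equiv_apply (σ : Equiv.Perm α) (S : Finset α) (i : α) :
    memSign (S.map σ.toEmbedding) (σ i) = memSign S i := by
  simp [memSign]

variable [Fintype α]

lemma sum_mul_memSign (a : α → ℝ) (S : Finset α) :
    ∑ i, a i * memSign S i = 2 * ∑ i ∈ S, a i - ∑ i, a i := by
  have h : ∀ i, a i * memSign S i = 2 * (if i ∈ S then a i else 0) - a i := by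
    intro i; unfold memSign; split_ifs <;> ring
  rw [sum_congr rfl fun i _ => h i, sum_sub_distrib, ← mul_sum, sum_ite_mem, univ_inter]

lemma sum_memSign_eq_zero {k : ℕ} (hk : Fintype.card α = 2 * k) {S : Finset α} (hS : #S = k) :
    ∑ i, memSign S i = 0 := by
  have h := sum_mul_memSign (fun _ => (1 : ℝ)) S
  simp only [one_mul, sum_const, card_univ, hS, hk, nsmul_eq_mul, mul_one, Nat.cast_mul] at h
  rw [h]; push_cast; ring

variable (k : ℕ)

def signCorrelation (i j : α) : ℝ :=
  ∑ S ∈ powersetCard k (univ : Finset α), memSign S i * memSign S j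

lemma signCorrelation_self (i : α) :
    signCorrelation k i i = #(powersetCard k (univ : Finset α)) := by
  simp [signCorrelation, memSign_mul_self]

lemma signCorrelation_equiv_apply (σ : Equiv.Perm α) (i j : α) :
    signCorrelation k (σ i) (σ j) = signCorrelation k i j := by
  rw [signCorrelation, ← sum_powersetCard_univ_map_equiv k σ]
  simp only [memSign_map_equiv_apply]
  rfl

variable {k}

lemma sum_signCorrelation_eq_zero (hk : Fintype.card α = 2 * k) (i : α) :
    ∑ j, signCorrelation k i j = 0 := by
  simp only [signCorrelation]
  rw [sum_comm]
  refine sum_eq_zero fun S hS => ?_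
  rw [← mul_sum, sum_memSign_eq_zero hk (mem_powersetCard.mp hS).2, mul_zero]

lemma signCorrelation_nonpos (hk : Fintype.card α = 2 * k) {i j : α} (hij : i ≠ j) :
    signCorrelation k i j ≤ 0 := by
  have hrow := sum_signCorrelation_eq_zero hk i
  have hconst : ∀ l ∈ univ.erase i, signCorrelation k i l = signCorrelation k i j := by
    intro l hl
    have h := signCorrelation_equiv_apply k (Equiv.swap j l) i j
    rwa [Equiv.swap_apply_of_ne_of_ne hij (mem_erase.mp hl).1.symm, Equiv.swap_apply_left] at h
  rw [← add_sum_erase _ _ (mem_univ i), signCorrelation_self, sum_congr rfl hconst, sum_const,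
    nsmul_eq_mul] at hrow
  have hcard : (0 : ℝ) < #(univ.erase i) := by
    exact_mod_cast card_pos.mpr ⟨j, mem_erase.mpr ⟨hij.symm, mem_univ j⟩⟩
  have hN : (0 : ℝ) ≤ #(powersetCard k (univ : Finset α)) := Nat.cast_nonneg _
  nlinarith

lemma sum_sq_sum_mul_memSign (a : α → ℝ) :
    ∑ S ∈ powersetCard k univ, (∑ i, a i * memSign S i) ^ 2
      = ∑ i, ∑ j, a i * a j * signCorrelation k i j := by
  simp only [sq, signCorrelation, mul_sum, sum_mul]
  rw [sum_comm]
  refine sum_congr rfl fun i _ => ?_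
  rw [sum_comm]
  exact sum_congr rfl fun j _ => sum_congr rfl fun S _ => by ring

lemma sum_sq_two_mul_sum_sub_sum_le (hk : Fintype.card α = 2 * k) (w : α → ℝ) :
    ∑ S ∈ powersetCard k univ, (2 * ∑ i ∈ S, w i ^ 2 - ∑ i, w i ^ 2) ^ 2
      ≤ (∑ i, w i ^ 4) * #(powersetCard k (univ : Finset α)) := by
  simp only [← sum_mul_memSign, sum_sq_sum_mul_memSign]
  calc ∑ i, ∑ j, w i ^ 2 * w j ^ 2 * signCorrelation k i j
      ≤ ∑ i, w i ^ 2 * w i ^ 2 * signCorrelation k i i :=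
        sum_mul_mul_le_sum_diag (fun _ _ => signCorrelation_nonpos hk) fun _ => sq_nonneg _
    _ = (∑ i, w i ^ 4) * #(powersetCard k (univ : Finset α)) := by
        simp only [signCorrelation_self, sum_mul]
        exact sum_congr rfl fun i _ => by ring

theorem expectation_sq_random_half_subset_general (d : ℕ) (hd : Even d)
    (w : Fin d → ℝ) :
    (∑ S ∈ Finset.powersetCard (d / 2) (Finset.univ : Finset (Fin d)),
        (2 * ∑ i ∈ S, (w i) ^ 2 - ∑ i, (w i) ^ 2) ^ 2) /
      (Finset.powersetCard (d / 2) (Finset.univ : Finset (Fin d))).card ≤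
    2 * ∑ i, (w i) ^ 4 := by
  have hk : Fintype.card (Fin d) = 2 * (d / 2) := by
    rw [Fintype.card_fin]; exact (Nat.two_mul_div_two_of_even hd).symm
  have hw4 : 0 ≤ ∑ i, w i ^ 4 := sum_nonneg fun i _ => by positivity
  calc _ ≤ ∑ i, w i ^ 4 :=
        div_le_of_le_mul₀ (Nat.cast_nonneg _) hw4 (sum_sq_two_mul_sum_sub_sum_le hk w)
    _ ≤ 2 * ∑ i, w i ^ 4 := by linarith

/-- For `w ∈ ℝ^d` (`d` even), `R` a uniformly random subset of size `d/2`, and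
`X = 2 ∑_{i∈R} w_i² - ‖w‖²`, one has `E[X²] ≤ 2 ‖w‖₄⁴`. -/
theorem expectation_sq_random_half_subset (d : ℕ) (hd : Even d) (hd0 : 0 < d)
    (w : Fin d → ℝ) :
    (∑ S ∈ Finset.powersetCard (d / 2) (Finset.univ : Finset (Fin d)),
        (2 * ∑ i ∈ S, (w i) ^ 2 - ∑ i, (w i) ^ 2) ^ 2) /
      (Finset.powersetCard (d / 2) (Finset.univ : Finset (Fin d))).card ≤
    2 * ∑ i, (w i) ^ 4 :=
  expectation_sq_random_half_subset_general d hd w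
end

section
/- (Ailon-Chazelle densification) Let x ∈ ℝ^d, H the d × d Walsh-Hadamard matrix, and B = diag(b) with b i.i.d. Rademacher. Then for any δ > 0, with probability at least 1 - δ over b, ‖d^{-1/2} H B x‖_∞ ≤ ‖x‖₂ · sqrt((2/d) · log(2d/δ)). -/
open Matrix

/-- The Walsh-Hadamard matrix of size `2^k`, defined recursively:
`H_1 = [1]`, and `H_{2d} = [[H_d, H_d], [H_d, -H_d]]` (so `H_2 = [[1,1],[1,-1]]`). -/
noncomputable def walshHadamard : (k : ℕ) → Matrix (Fin (2 ^ k)) (Fin (2 ^ k)) ℝ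
  | 0 => fun _ _ => 1
  | (k + 1) =>
      Matrix.reindex
        (finSumFinEquiv.trans (finCongr (by omega)))
        (finSumFinEquiv.trans (finCongr (by omega)))
        (Matrix.fromBlocks (walshHadamard k) (walshHadamard k)
          (walshHadamard k) (-(walshHadamard k)))

open Finset

/-!
Since the entries of `H` are `±1`, each coordinate of `d^{-1/2} H B x` is a Rademacher sum
`∑ₜ aₜ bₜ` with `∑ₜ aₜ² = ‖x‖₂² / d`. Averaging over all sign vectors,
`∑_b exp (λ ∑ₜ aₜ bₜ) = ∏ₜ 2 cosh (λ aₜ) ≤ 2^d exp (λ² ∑ₜ aₜ² / 2)`, so by Chernoff's bound a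
coordinate exceeds `√(2 (∑ₜ aₜ²) L)` in absolute value for at most `2 ⋅ 2^d e^{-L}` sign
vectors. A union bound over the `d` coordinates with `L = log (2d/δ)` gives the theorem.
-/

open Real

lemma walshHadamard_apply_sq (k : ℕ) (i t : Fin (2 ^ k)) : walshHadamard k i t ^ 2 = 1 := by
  induction k with
  | zero => simp [walshHadamard]
  | succ k ih =>
    simp only [walshHadamard, Matrix.reindex_apply, Matrix.submatrix_apply]
    rcases (finSumFinEquiv.trans (finCongr (by omega : 2 ^ k + 2 ^ k = 2 ^ (k + 1)))).symm i
      with a | a <;>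
    rcases (finSumFinEquiv.trans (finCongr (by omega : 2 ^ k + 2 ^ k = 2 ^ (k + 1)))).symm t
      with b | b <;>
    simp [ih]

lemma card_sub_sum_card_filter_not_le_card_filter_forall {Ω κ : Type*} [Fintype Ω] [Fintype κ]
    (P : κ → Ω → Prop) [∀ i, DecidablePred (P i)] :
    (Fintype.card Ω : ℝ) - ∑ i, (#{ω | ¬P i ω} : ℝ) ≤ #{ω | ∀ i, P i ω} := by
  classical
  have hbad : (#{ω | ¬∀ i, P i ω} : ℝ) ≤ ∑ i, (#{ω | ¬P i ω} : ℝ) := by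
    have : ({ω | ¬∀ i, P i ω} : Finset Ω) = univ.biUnion fun i => {ω | ¬P i ω} := by
      ext; simp
    exact_mod_cast this ▸ card_biUnion_le
  have hsplit := card_filter_add_card_filter_not (s := univ) fun ω => ∀ i, P i ω
  rw [card_univ] at hsplit
  have : (#{ω | ∀ i, P i ω} : ℝ) + #{ω | ¬∀ i, P i ω} = Fintype.card Ω := by exact_mod_cast hsplit
  linarith

section Rademacher

variable {ι : Type*} [Fintype ι]

def rademacherSum (a : ι → ℝ) (ε : ι → Bool) : ℝ :=
  ∑ t, a t * if ε t then 1 else -1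

lemma rademacherSum_neg (a : ι → ℝ) (ε : ι → Bool) :
    rademacherSum (-a) ε = -rademacherSum a ε := by
  simp only [rademacherSum, Pi.neg_apply, neg_mul, sum_neg_distrib]

lemma rademacherSum_smul (l : ℝ) (a : ι → ℝ) (ε : ι → Bool) :
    rademacherSum (l • a) ε = l * rademacherSum a ε := by
  simp [rademacherSum, mul_sum]

lemma rademacherSum_eq_zero_of_sum_sq_eq_zero {a : ι → ℝ} (ha : ∑ t, a t ^ 2 = 0)
    (ε : ι → Bool) : rademacherSum a ε = 0 := by
  have : ∀ t, a t = 0 := fun t => by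
    simpa using (sum_eq_zero_iff_of_nonneg fun t _ => sq_nonneg (a t)).1 ha t (mem_univ t)
  simp [rademacherSum, this]

variable [DecidableEq ι]

lemma sum_exp_rademacherSum (a : ι → ℝ) :
    ∑ ε, exp (rademacherSum a ε) = ∏ t, 2 * cosh (a t) := by
  have two_cosh : ∀ t, 2 * cosh (a t) = ∑ b : Bool, exp (a t * if b then 1 else -1) := by
    simp [cosh_eq, mul_div_cancel₀]
  simp only [two_cosh, Fintype.prod_sum, rademacherSum, exp_sum]

lemma sum_exp_rademacherSum_le (a : ι → ℝ) :
    ∑ ε, exp (rademacherSum a ε) ≤ 2 ^ Fintype.card ι * exp ((∑ t, a t ^ 2) / 2) := by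
  rw [sum_exp_rademacherSum, sum_div, exp_sum, ← card_univ, ← prod_const, ← prod_mul_distrib]
  gcongr
  exact cosh_le_exp_half_sq _

lemma card_rademacherSum_ge_le (a : ι → ℝ) {s : ℝ} (hs : 0 ≤ s) (ha : 0 < ∑ t, a t ^ 2) :
    (#{ε | s ≤ rademacherSum a ε} : ℝ) ≤
      2 ^ Fintype.card ι * exp (-(s ^ 2 / (2 * ∑ t, a t ^ 2))) := by
  set σ2 := ∑ t, a t ^ 2
  -- the Chernoff parameter minimising `exp (l ^ 2 * σ2 / 2 - l * s)`
  set l := s / σ2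
  have markov : (#{ε | s ≤ rademacherSum a ε} : ℝ) * exp (l * s) ≤
      ∑ ε, exp (rademacherSum (l • a) ε) := by
    rw [← nsmul_eq_mul]
    refine (card_nsmul_le_sum _ _ _ fun ε hε => ?_).trans
      (sum_le_sum_of_subset_of_nonneg (subset_univ _) fun _ _ _ => (exp_pos _).le)
    rw [rademacherSum_smul]
    gcongr
    exact (mem_filter.1 hε).2
  have hl : (∑ t, (l • a) t ^ 2) / 2 - l * s = -(s ^ 2 / (2 * σ2)) := by
    have : ∑ t, (l • a) t ^ 2 = l ^ 2 * σ2 := by simp [mul_pow, mul_sum, σ2]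
    simp only [this, l]
    field_simp
    ring
  calc _ ≤ (∑ ε, exp (rademacherSum (l • a) ε)) / exp (l * s) :=
        (le_div_iff₀ (exp_pos _)).2 markov
    _ ≤ 2 ^ Fintype.card ι * exp ((∑ t, (l • a) t ^ 2) / 2) / exp (l * s) := by
        gcongr
        exact sum_exp_rademacherSum_le _
    _ = _ := by rw [mul_div_assoc, ← exp_sub, hl]

lemma card_abs_rademacherSum_gt_le (a : ι → ℝ) {L : ℝ} (hL : 0 ≤ L) :
    (#{ε | √(2 * (∑ t, a t ^ 2) * L) < |rademacherSum a ε|} : ℝ) ≤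
      2 * 2 ^ Fintype.card ι * exp (-L) := by
  rcases (sum_nonneg fun t _ => sq_nonneg (a t) : 0 ≤ ∑ t, a t ^ 2).eq_or_lt with ha | ha
  · simp [rademacherSum_eq_zero_of_sum_sq_eq_zero ha.symm, (sqrt_nonneg _).not_gt]
    positivity
  set s := √(2 * (∑ t, a t ^ 2) * L)
  have hexp : ∀ b : ι → ℝ, ∑ t, b t ^ 2 = ∑ t, a t ^ 2 →
      (#{ε | s ≤ rademacherSum b ε} : ℝ) ≤ 2 ^ Fintype.card ι * exp (-L) := by
    intro b hb
    convert card_rademacherSum_ge_le b (sqrt_nonneg _) (hb ▸ ha) using 4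
    rw [hb, sq_sqrt (by positivity)]
    field_simp
  have hsplit : ({ε | s < |rademacherSum a ε|} : Finset (ι → Bool)) ⊆
      univ.filter (s ≤ rademacherSum a ·) ∪ univ.filter (s ≤ rademacherSum (-a) ·) := by
    intro ε hε
    simp only [mem_union, mem_filter, mem_univ, true_and, rademacherSum_neg] at hε ⊢
    exact le_abs.1 hε.le
  calc (#{ε | s < |rademacherSum a ε|} : ℝ)
      ≤ #{ε | s ≤ rademacherSum a ε} + #{ε | s ≤ rademacherSum (-a) ε} := by
        exact_mod_cast (card_le_card hsplit).trans (card_union_le _ _)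
    _ ≤ 2 ^ Fintype.card ι * exp (-L) + 2 ^ Fintype.card ι * exp (-L) :=
        add_le_add (hexp a rfl) (hexp (-a) (by simp))
    _ = _ := by ring

lemma le_card_forall_abs_rademacherSum_le {κ : Type*} [Fintype κ] (a : κ → ι → ℝ) {L : ℝ}
    (hL : 0 ≤ L) :
    2 ^ Fintype.card ι * (1 - 2 * Fintype.card κ * exp (-L)) ≤
      #{ε | ∀ i, |rademacherSum (a i) ε| ≤ √(2 * (∑ t, a i t ^ 2) * L)} := by
  have hunion := card_sub_sum_card_filter_not_le_card_filter_forall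
    fun i (ε : ι → Bool) => |rademacherSum (a i) ε| ≤ √(2 * (∑ t, a i t ^ 2) * L)
  simp only [not_le, Fintype.card_fun, Fintype.card_bool] at hunion
  refine le_trans ?_ hunion
  have := sum_le_sum fun i (_ : i ∈ univ) => card_abs_rademacherSum_gt_le (a i) hL
  rw [sum_const, card_univ, nsmul_eq_mul] at this
  push_cast
  linarith

end Rademacher

lemma rpow_neg_half_sq {n : ℝ} (hn : 0 ≤ n) : (n ^ (-(1 : ℝ) / 2)) ^ 2 = n⁻¹ := by
  rw [← rpow_natCast, ← rpow_mul hn]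
  norm_num [rpow_neg_one]

theorem densification_of_sq_eq_one {ι : Type*} [Fintype ι] [DecidableEq ι] [Nonempty ι]
    (H : Matrix ι ι ℝ) (hH : ∀ i t, H i t ^ 2 = 1) (x : ι → ℝ) {δ : ℝ} (hδ : 0 < δ) :
    1 - δ ≤ ((univ.filter fun ε : ι → Bool => ∀ i, |(Fintype.card ι : ℝ) ^ (-(1 : ℝ) / 2) *
        ∑ t, H i t * (if ε t then (1 : ℝ) else -1) * x t| ≤
          √(∑ t, x t ^ 2) * √((2 / Fintype.card ι) * log (2 * Fintype.card ι / δ))).card : ℝ) /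
      2 ^ Fintype.card ι := by
  set n := Fintype.card ι
  have hn : (1 : ℝ) ≤ n := by exact_mod_cast Fintype.card_pos
  rcases le_or_gt 1 δ with hδ1 | hδ1
  · exact (sub_nonpos.2 hδ1).trans (by positivity)
  set L := log (2 * n / δ)
  have hL : 0 ≤ L := log_nonneg <| by rw [le_div_iff₀ hδ]; linarith
  set a : ι → ι → ℝ := fun i t => (n : ℝ) ^ (-(1 : ℝ) / 2) * H i t * x t
  have hsum_sq : ∀ i, ∑ t, a i t ^ 2 = (∑ t, x t ^ 2) / n := fun i => by
    simp only [a, mul_pow, rpow_neg_half_sq (Nat.cast_nonneg n), hH, sum_div]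
    exact sum_congr rfl fun t _ => by ring
  have hgood : ∀ ε : ι → Bool, ∀ i,
      |(n : ℝ) ^ (-(1 : ℝ) / 2) * ∑ t, H i t * (if ε t then (1 : ℝ) else -1) * x t| ≤
          √(∑ t, x t ^ 2) * √((2 / n) * L) ↔
        |rademacherSum (a i) ε| ≤ √(2 * (∑ t, a i t ^ 2) * L) := fun ε i => by
    have hcoord : (n : ℝ) ^ (-(1 : ℝ) / 2) * ∑ t, H i t * (if ε t then (1 : ℝ) else -1) * x t =
        rademacherSum (a i) ε := by
      rw [rademacherSum, mul_sum]
      exact sum_congr rfl fun t _ => by ring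
    rw [hcoord, ← sqrt_mul (sum_nonneg fun t _ => sq_nonneg (x t)), hsum_sq]
    ring_nf
  simp_rw [hgood]
  rw [le_div_iff₀ (by positivity)]
  refine le_of_eq_of_le ?_ (le_card_forall_abs_rademacherSum_le a hL)
  rw [Real.exp_neg, exp_log (by positivity)]
  field_simp
  ring

/-- (Ailon–Chazelle densification.) For `x ∈ ℝ^d`, `H` the `d × d` Walsh-Hadamard matrix
and `B = diag(b)` with i.i.d. Rademacher `b`: for any `δ > 0`, with probability at least
`1 - δ` over `b`, `‖d^{-1/2} H B x‖_∞ ≤ ‖x‖₂ √((2/d) log(2d/δ))`. -/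
theorem ailon_chazelle_densification (k : ℕ) (x : Fin (2 ^ k) → ℝ)
    (d : ℕ) (hd : d = 2 ^ k) (δ : ℝ) (hδ : 0 < δ) :
    (1 : ℝ) - δ ≤
      ((Finset.univ.filter (fun ε : Fin (2 ^ k) → Bool =>
          ∀ i, |(d : ℝ) ^ (-(1 : ℝ) / 2) *
              ∑ t, walshHadamard k i t * (if ε t then (1 : ℝ) else -1) * x t| ≤
            Real.sqrt (∑ t, (x t) ^ 2) *
              Real.sqrt ((2 / d) * Real.log (2 * d / δ)))).card : ℝ) / 2 ^ d := by
  subst hd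
  -- `convert`, because the statement decides `∀ i : Fin _` by `Nat.decidableForallFin`
  convert densification_of_sq_eq_one (walshHadamard k) (walshHadamard_apply_sq k) x hδ <;>
    rw [Fintype.card_fin]
end
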